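/- arXiv:2411.02274 — 4 statements merged into one kernel-verified Lean document; each statement's English description precedes it below -/
import Mathlib

section
/- Let a and x be elements of a C*-algebra with a a positive contraction and x a contraction. For every ε > 0 there is δ > 0 (depending only on ε) such that ‖[a, x]‖ < δ implies ‖[a^{1/2}, x]‖ < ε. -/
/-!
Approximate `√` uniformly on `[0, 1]` by a real polynomial `q` to within `ε / 4` (Weierstrass).
Since `[a ^ (n + 1), x] = a [a ^ n, x] + [a, x] a ^ n`, a contraction `a` satisfies
`‖[q(a), x]‖ ≤ L ‖[a, x]‖` with `L = ∑ n |qₙ|`, while `‖a^{1/2} - q(a)‖ ≤ ε / 4` by the continuous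
functional calculus, as `σ(a) ⊆ [0, 1]`. Hence `‖[a^{1/2}, x]‖ ≤ ε / 2 + L ‖[a, x]‖`, and
`δ = ε / (4 (L + 1))` works. Polynomials in `a` make sense after passing to the unitization.
-/

open Polynomial

universe u

section Commutator

variable {B : Type*}

lemma norm_commutator_le_of_approx [NonUnitalNormedRing B] (s p x : B) :
    ‖s * x - x * s‖ ≤ 2 * ‖s - p‖ * ‖x‖ + ‖p * x - x * p‖ := by
  have hsplit : s * x - x * s = ((s - p) * x - x * (s - p)) + (p * x - x * p) := by
    noncomm_ring
  calc ‖s * x - x * s‖ ≤ ‖(s - p) * x - x * (s - p)‖ + ‖p * x - x * p‖ :=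
        hsplit ▸ norm_add_le _ _
    _ ≤ ‖(s - p) * x‖ + ‖x * (s - p)‖ + ‖p * x - x * p‖ := by gcongr; exact norm_sub_le _ _
    _ ≤ ‖s - p‖ * ‖x‖ + ‖x‖ * ‖s - p‖ + ‖p * x - x * p‖ := by
        gcongr <;> exact norm_mul_le _ _
    _ = 2 * ‖s - p‖ * ‖x‖ + ‖p * x - x * p‖ := by ring

variable [NormedRing B]

lemma norm_commutator_pow_le {a : B} (x : B) (ha : ‖a‖ ≤ 1) (n : ℕ) :
    ‖a ^ n * x - x * a ^ n‖ ≤ n * ‖a * x - x * a‖ := by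
  induction n with
  | zero => simp
  | succ n ih =>
    have hsplit : a ^ (n + 1) * x - x * a ^ (n + 1)
        = a * (a ^ n * x - x * a ^ n) + (a * x - x * a) * a ^ n := by
      rw [pow_succ']
      noncomm_ring
    have hpow : ‖(a * x - x * a) * a ^ n‖ ≤ ‖a * x - x * a‖ * 1 := by
      cases n with
      | zero => simp
      | succ n =>
        exact (norm_mul_le _ _).trans <| by
          gcongr; exact (norm_pow_le' a n.succ_pos).trans (pow_le_one₀ (norm_nonneg a) ha)
    calc ‖a ^ (n + 1) * x - x * a ^ (n + 1)‖
        ≤ ‖a‖ * ‖a ^ n * x - x * a ^ n‖ + ‖a * x - x * a‖ * 1 := by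
          rw [hsplit]
          exact (norm_add_le _ _).trans (add_le_add (norm_mul_le _ _) hpow)
      _ ≤ 1 * (n * ‖a * x - x * a‖) + ‖a * x - x * a‖ * 1 := by gcongr
      _ = (n + 1 : ℕ) * ‖a * x - x * a‖ := by push_cast; ring

lemma norm_commutator_aeval_le {𝕜 : Type*} [NormedField 𝕜] [NormedAlgebra 𝕜 B] (q : 𝕜[X])
    {a : B} (x : B) (ha : ‖a‖ ≤ 1) :
    ‖aeval a q * x - x * aeval a q‖ ≤
      (∑ n ∈ Finset.range (q.natDegree + 1), ‖q.coeff n‖ * n) * ‖a * x - x * a‖ := by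
  have hsum : aeval a q * x - x * aeval a q
      = ∑ n ∈ Finset.range (q.natDegree + 1), q.coeff n • (a ^ n * x - x * a ^ n) := by
    simp only [aeval_eq_sum_range, Finset.sum_mul, Finset.mul_sum, ← Finset.sum_sub_distrib,
      smul_mul_assoc, mul_smul_comm, smul_sub]
  rw [hsum, Finset.sum_mul]
  refine (norm_sum_le _ _).trans (Finset.sum_le_sum fun n _ => ?_)
  rw [norm_smul, mul_assoc]
  exact mul_le_mul_of_nonneg_left (norm_commutator_pow_le x ha n) (norm_nonneg _)

end Commutator

section CStarAlgebra

variable {B : Type*} [CStarAlgebra B]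

lemma norm_cfc_sub_aeval_le {f : ℝ → ℝ} {a : B} (q : ℝ[X]) {η : ℝ} (hη : 0 ≤ η)
    (hf : ContinuousOn f (spectrum ℝ a)) (hq : ∀ t ∈ spectrum ℝ a, |f t - q.eval t| ≤ η)
    (ha : IsSelfAdjoint a := by cfc_tac) :
    ‖cfc f a - aeval a q‖ ≤ η := by
  rw [← cfc_polynomial q a, ← cfc_sub f (q.eval ·) a]
  exact norm_cfc_le hη hq

variable [PartialOrder B] [StarOrderedRing B]

lemma spectrum_subset_Icc_norm_of_nonneg {a : B} (ha : 0 ≤ a) :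
    spectrum ℝ a ⊆ Set.Icc 0 ‖a‖ := by
  nontriviality B
  exact fun t ht => ⟨spectrum_nonneg_of_nonneg ha ht,
    (le_abs_self t).trans (spectrum.norm_le_norm_of_mem ht)⟩

lemma norm_sqrt_sub_aeval_le {a : B} (ha : 0 ≤ a) (ha1 : ‖a‖ ≤ 1) (q : ℝ[X]) {η : ℝ}
    (hη : 0 ≤ η) (hq : ∀ t ∈ Set.Icc (0 : ℝ) 1, |q.eval t - √t| ≤ η) :
    ‖CFC.sqrt a - aeval a q‖ ≤ η := by
  rw [CFC.sqrt_eq_real_sqrt a, cfcₙ_eq_cfc]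
  refine norm_cfc_sub_aeval_le q hη Real.continuous_sqrt.continuousOn fun t ht => ?_
  rw [abs_sub_comm]
  exact hq t (Set.Icc_subset_Icc_right ha1 (spectrum_subset_Icc_norm_of_nonneg ha ht))

lemma norm_commutator_sqrt_le {a : B} (x : B) (ha : 0 ≤ a) (ha1 : ‖a‖ ≤ 1) (hx : ‖x‖ ≤ 1)
    (q : ℝ[X]) {η : ℝ} (hη : 0 ≤ η) (hq : ∀ t ∈ Set.Icc (0 : ℝ) 1, |q.eval t - √t| ≤ η) :
    ‖CFC.sqrt a * x - x * CFC.sqrt a‖ ≤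
      2 * η + (∑ n ∈ Finset.range (q.natDegree + 1), ‖q.coeff n‖ * n) * ‖a * x - x * a‖ := by
  calc ‖CFC.sqrt a * x - x * CFC.sqrt a‖
      ≤ 2 * ‖CFC.sqrt a - aeval a q‖ * ‖x‖ + ‖aeval a q * x - x * aeval a q‖ :=
        norm_commutator_le_of_approx _ _ _
    _ ≤ 2 * η * 1 +
          (∑ n ∈ Finset.range (q.natDegree + 1), ‖q.coeff n‖ * n) * ‖a * x - x * a‖ := by
        gcongr
        · exact norm_sqrt_sub_aeval_le ha ha1 q hη hq
        · exact norm_commutator_aeval_le q x ha1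
    _ = _ := by rw [mul_one]

end CStarAlgebra

open scoped CStarAlgebra

/-- For every `ε > 0` there is `δ > 0`, depending only on `ε`, such that in any C*-algebra,
if `a` is a positive contraction and `x` a contraction with `‖[a, x]‖ < δ`, then
`‖[a^{1/2}, x]‖ < ε` (here `s` denotes the positive square root of `a`). -/
theorem commutator_sqrt_estimate {ε : ℝ} (hε : 0 < ε) :
    ∃ δ > 0, ∀ (A : Type u) (_ : NonUnitalCStarAlgebra A) (a x s : A),
      (∃ b, a = star b * b) → ‖a‖ ≤ 1 → ‖x‖ ≤ 1 →
      (∃ c, s = star c * c) → s * s = a →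
      ‖a * x - x * a‖ < δ → ‖s * x - x * s‖ < ε := by
  obtain ⟨q, hq⟩ := exists_polynomial_near_of_continuousOn 0 1 Real.sqrt
    Real.continuous_sqrt.continuousOn (ε / 4) (by positivity)
  set L := ∑ n ∈ Finset.range (q.natDegree + 1), ‖q.coeff n‖ * n
  have hL : 0 ≤ L := by positivity
  refine ⟨ε / (4 * (L + 1)), by positivity, fun A _ a x s ⟨b, hb⟩ ha1 hx ⟨c, hc⟩ hsa hax => ?_⟩
  let _ := CStarAlgebra.spectralOrder A
  have := CStarAlgebra.spectralOrderedRing A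
  have ha : 0 ≤ (a : A⁺¹) := Unitization.inr_nonneg_iff.mpr (hb ▸ star_mul_self_nonneg b)
  have hs : CFC.sqrt (a : A⁺¹) = s := by
    rw [Unitization.sqrt_inr, CFC.sqrt_unique hsa (hc ▸ star_mul_self_nonneg c)]
  have key := norm_commutator_sqrt_le (x : A⁺¹) ha (by rwa [Unitization.norm_inr])
    (by rwa [Unitization.norm_inr]) q (by positivity) fun t ht => (hq t ht).le
  simp only [hs, ← Unitization.inr_mul, ← Unitization.inr_sub, Unitization.norm_inr] at key
  have hLδ : L * (ε / (4 * (L + 1))) < ε / 2 := by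
    rw [mul_div_assoc', div_lt_div_iff₀ (by positivity) two_pos]
    nlinarith
  calc ‖s * x - x * s‖ ≤ 2 * (ε / 4) + L * ‖a * x - x * a‖ := key
    _ ≤ 2 * (ε / 4) + L * (ε / (4 * (L + 1))) := by gcongr
    _ < ε := by linarith
end

section
/- Let E be a σ-unital C*-algebra and (fₙ) a sequence of positive contractions in E with Σₙ fₙ² strictly convergent to 1_{M(E)} and fₘfₙ = 0 whenever |m − n| ≥ 2. Then for every k ∈ ℤ and every bounded sequence (aₙ) in M(E), the sum Σₙ fₙ aₙ f_{n+k} converges strictly to an element of M(E) with ‖Σₙ fₙ aₙ f_{n+k}‖ ≤ supₙ ‖aₙ‖, and moreover the image of this element in the corona Q(E) = M(E)/E has norm at most limsupₙ ‖aₙ‖. -/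
open scoped MultiplierAlgebra
open Filter

/-- Strict convergence of a sequence in the multiplier algebra `𝓜(ℂ, E)`. -/
def StrictTendsto {E : Type*} [NonUnitalCStarAlgebra E]
    (s : ℕ → 𝓜(ℂ, E)) (T : 𝓜(ℂ, E)) : Prop :=
  ∀ a : E, Tendsto (fun n => ‖(s n - T) * (a : 𝓜(ℂ, E))‖) atTop (nhds 0) ∧
    Tendsto (fun n => ‖(a : 𝓜(ℂ, E)) * (s n - T)‖) atTop (nhds 0)

/-- A countable approximate unit of positive contractions (σ-unitality witness). -/
def IsApproxUnit {E : Type*} [NonUnitalCStarAlgebra E] (e : ℕ → E) : Prop :=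
  (∀ n, (∃ b, e n = star b * b) ∧ ‖e n‖ ≤ 1) ∧
  ∀ x : E, Tendsto (fun n => ‖e n * x - x‖) atTop (nhds 0) ∧
    Tendsto (fun n => ‖x * e n - x‖) atTop (nhds 0)

/-!
Write `xₙ = fₙ` and `yₙ = f_{n+k}` in `𝓜(ℂ, E)`. The partial sums of `Σ xₙ xₙ*` increase and
converge strictly to `1`, so every block `Σ_{Q ≤ n < P} xₙ xₙ*`, and likewise every block of
`Σ yₙ* yₙ`, has norm at most `1`. The C⋆-algebraic Cauchy–Schwarz inequality
`‖Σ pₙ qₙ‖² ≤ ‖Σ pₙ pₙ*‖ ‖Σ qₙ* qₙ‖` with `pₙ = xₙ aₙ`, `qₙ = yₙ` then bounds every block of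
`Σ xₙ aₙ yₙ` by the supremum of `‖aₙ‖` over the block; with `qₙ = yₙ b` (resp. `pₙ = b xₙ`) for
`b ∈ E` it bounds `‖(S_P - S_Q) b‖²` by `C² ‖b‖ ‖Σ_{Q ≤ n < P} yₙ* yₙ b‖` (resp. the mirror
image), so the partial sums `S_N` are strictly Cauchy. Strictly Cauchy sequences converge in
`𝓜(ℂ, E)` (Banach–Steinhaus makes the limit bounded), and strict limits do not increase norms.
Hence `‖T - S_N‖ ≤ sup_{n ≥ N} ‖aₙ‖`, and `S_N ∈ E` gives the corona estimate.
-/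

open Topology Finset
open scoped WithCStarModule

section CStarAlgebra

variable {A : Type*} [NonUnitalCStarAlgebra A] [PartialOrder A] [StarOrderedRing A] {ι : Type*}

theorem CStarAlgebra.norm_sum_mul_sq_le (s : Finset ι) (p q : ι → A) :
    ‖∑ i ∈ s, p i * q i‖ ^ 2 ≤ ‖∑ i ∈ s, p i * star (p i)‖ * ‖∑ i ∈ s, star (q i) * q i‖ := by
  -- In the Hilbert `A`-module `A^s` the inner product is `⟪x, y⟫ = Σ yᵢ * star xᵢ`.
  let x : C⋆ᵐᵒᵈ(A, s → A) := (WithCStarModule.equiv A (s → A)).symm fun i => star (q i)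
  let y : C⋆ᵐᵒᵈ(A, s → A) := (WithCStarModule.equiv A (s → A)).symm fun i => p i
  have hxy : inner A x y = ∑ i ∈ s, p i * q i := by
    simpa [WithCStarModule.pi_inner, WithCStarModule.inner_def, x, y] using
      sum_attach s fun i => p i * q i
  have hx : ‖x‖ ^ 2 = ‖∑ i ∈ s, star (q i) * q i‖ := by
    simpa [WithCStarModule.pi_norm_sq, WithCStarModule.inner_def, x] using
      congrArg norm (sum_attach s fun i => star (q i) * q i)
  have hy : ‖y‖ ^ 2 = ‖∑ i ∈ s, p i * star (p i)‖ := by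
    simpa [WithCStarModule.pi_norm_sq, WithCStarModule.inner_def, y] using
      congrArg norm (sum_attach s fun i => p i * star (p i))
  calc ‖∑ i ∈ s, p i * q i‖ ^ 2 = ‖inner A x y‖ ^ 2 := by rw [hxy]
    _ ≤ (‖x‖ * ‖y‖) ^ 2 := by gcongr; exact CStarModule.norm_inner_le _
    _ = _ := by rw [mul_pow, hx, hy, mul_comm]

theorem CStarAlgebra.norm_sum_mul_mul_sq_le (s : Finset ι) (p a q : ι → A) {C : ℝ}
    (ha : ∀ i ∈ s, ‖a i‖ ≤ C) :
    ‖∑ i ∈ s, p i * a i * q i‖ ^ 2 ≤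
      C ^ 2 * ‖∑ i ∈ s, p i * star (p i)‖ * ‖∑ i ∈ s, star (q i) * q i‖ := by
  have hconj : ∑ i ∈ s, p i * a i * star (p i * a i) ≤ C ^ 2 • ∑ i ∈ s, p i * star (p i) := by
    rw [smul_sum]
    refine sum_le_sum fun i hi => ?_
    have hai : ‖a i * star (a i)‖ ≤ C ^ 2 := by
      rw [CStarRing.norm_self_mul_star, ← sq]
      exact pow_le_pow_left₀ (norm_nonneg _) (ha i hi) 2
    calc p i * a i * star (p i * a i) = p i * (a i * star (a i)) * star (p i) := by
          rw [star_mul]; noncomm_ring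
      _ ≤ ‖a i * star (a i)‖ • (p i * star (p i)) :=
          CStarAlgebra.star_right_conjugate_le_norm_smul
      _ ≤ C ^ 2 • (p i * star (p i)) := smul_le_smul_of_nonneg_right hai (mul_star_self_nonneg _)
  have hnorm : ‖∑ i ∈ s, p i * a i * star (p i * a i)‖ ≤ C ^ 2 * ‖∑ i ∈ s, p i * star (p i)‖ := by
    calc _ ≤ ‖C ^ 2 • ∑ i ∈ s, p i * star (p i)‖ := CStarAlgebra.norm_le_norm_of_nonneg_of_le
          (sum_nonneg fun i _ => mul_star_self_nonneg _) hconj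
      _ = _ := by rw [norm_smul, Real.norm_of_nonneg (sq_nonneg C)]
  calc ‖∑ i ∈ s, p i * a i * q i‖ ^ 2
      ≤ ‖∑ i ∈ s, p i * a i * star (p i * a i)‖ * ‖∑ i ∈ s, star (q i) * q i‖ :=
        CStarAlgebra.norm_sum_mul_sq_le s (fun i => p i * a i) q
    _ ≤ _ := mul_le_mul_of_nonneg_right hnorm (norm_nonneg _)

theorem CStarAlgebra.norm_sum_mul_mul_le (s : Finset ι) {p a q : ι → A}
    (hp : ‖∑ i ∈ s, p i * star (p i)‖ ≤ 1) (hq : ‖∑ i ∈ s, star (q i) * q i‖ ≤ 1) {C : ℝ}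
    (hC : 0 ≤ C) (ha : ∀ i ∈ s, ‖a i‖ ≤ C) : ‖∑ i ∈ s, p i * a i * q i‖ ≤ C := by
  refine le_of_pow_le_pow_left₀ two_ne_zero hC ?_
  calc ‖∑ i ∈ s, p i * a i * q i‖ ^ 2
      ≤ C ^ 2 * ‖∑ i ∈ s, p i * star (p i)‖ * ‖∑ i ∈ s, star (q i) * q i‖ :=
        CStarAlgebra.norm_sum_mul_mul_sq_le s p a q ha
    _ ≤ C ^ 2 * 1 * 1 := by gcongr
    _ = C ^ 2 := by ring

end CStarAlgebra

/-- The paper's `f_{n+k}`, with the convention `f_m = 0` for `m < 0`. -/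
def shiftSeq {α : Type*} [Zero α] (x : ℕ → α) (k : ℤ) (n : ℕ) : α :=
  if 0 ≤ (n : ℤ) + k then x ((n : ℤ) + k).toNat else 0

theorem apply_shiftSeq {α β : Type*} [Zero α] [Zero β] (g : α → β) (hg : g 0 = 0) (x : ℕ → α)
    (k : ℤ) (n : ℕ) : g (shiftSeq x k n) = shiftSeq (fun m => g (x m)) k n := by
  unfold shiftSeq
  split_ifs <;> simp [hg]

theorem Finset.sum_Ico_shiftSeq {M : Type*} [AddCommMonoid M] (v : ℕ → M) (k : ℤ) (Q P : ℕ) :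
    ∑ n ∈ Ico Q P, shiftSeq v k n = ∑ m ∈ Ico ((Q : ℤ) + k).toNat ((P : ℤ) + k).toNat, v m := by
  rcases le_total Q P with h | h
  · induction P, h using Nat.le_induction with
    | base => simp
    | succ P hQP ih =>
      rw [sum_Ico_succ_top hQP, ih, shiftSeq]
      split_ifs with hP
      · rw [show ((P + 1 : ℕ) + k : ℤ).toNat = ((P : ℤ) + k).toNat + 1 by omega,
          sum_Ico_succ_top (by omega)]
      · rw [add_zero, show ((P + 1 : ℕ) + k : ℤ).toNat = ((P : ℤ) + k).toNat by omega]
  · rw [Ico_eq_empty_of_le h, Ico_eq_empty_of_le (by omega), sum_empty, sum_empty]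

theorem CauchySeq.sum_range_shiftSeq {G : Type*} [AddCommGroup G] [UniformSpace G]
    [IsUniformAddGroup G] {p : ℕ → G} (h : CauchySeq fun N => ∑ n ∈ range N, p n) (k : ℤ) :
    CauchySeq fun N => ∑ n ∈ range N, shiftSeq p k n := by
  have hφ : Tendsto (fun N : ℕ => ((N : ℤ) + k).toNat) atTop atTop :=
    tendsto_atTop_atTop.mpr fun m => ⟨m + k.natAbs, fun N hN => by omega⟩
  have hsum : ∀ N : ℕ, ∑ n ∈ range N, shiftSeq p k n =
      ∑ n ∈ range ((N : ℤ) + k).toNat, p n + -∑ n ∈ range k.toNat, p n := fun N => by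
    rw [range_eq_Ico, sum_Ico_shiftSeq, ← sub_eq_add_neg, ← sum_Ico_eq_sub _ (by omega),
      Nat.cast_zero, zero_add]
  rw [funext hsum]
  exact (h.comp_tendsto hφ).add_const

theorem cauchySeq_of_norm_sub_sq_le {G H : Type*} [SeminormedAddCommGroup G]
    [SeminormedAddCommGroup H] {u : ℕ → G} {v : ℕ → H} (hv : CauchySeq v) {K : ℝ} (hK : 0 ≤ K)
    (h : ∀ Q P, Q ≤ P → ‖u P - u Q‖ ^ 2 ≤ K * ‖v P - v Q‖) : CauchySeq u := by
  rw [Metric.cauchySeq_iff']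
  intro ε hε
  obtain ⟨N, hN⟩ := Metric.cauchySeq_iff'.mp hv (ε ^ 2 / (K + 1)) (by positivity)
  refine ⟨N, fun n hn => ?_⟩
  rw [dist_eq_norm]
  refine lt_of_pow_lt_pow_left₀ 2 hε.le ((h N n hn).trans_lt ?_)
  calc K * ‖v n - v N‖ ≤ K * (ε ^ 2 / (K + 1)) :=
        mul_le_mul_of_nonneg_left (dist_eq_norm (v n) (v N) ▸ hN n hn).le hK
    _ < (K + 1) * (ε ^ 2 / (K + 1)) := by gcongr; linarith
    _ = ε ^ 2 := mul_div_cancel₀ _ (by positivity)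

namespace DoubleCentralizer

variable {E : Type*} [NonUnitalCStarAlgebra E]

theorem norm_coe (b : E) : ‖(b : 𝓜(ℂ, E))‖ = ‖b‖ := by
  rw [← norm_fst, coe_fst, ContinuousLinearMap.opNorm_mul_apply]

theorem coe_zero : ((0 : E) : 𝓜(ℂ, E)) = 0 :=
  map_zero (coeHom : E →⋆ₙₐ[ℂ] 𝓜(ℂ, E))

theorem coe_star (b : E) : ((star b : E) : 𝓜(ℂ, E)) = star (b : 𝓜(ℂ, E)) :=
  map_star (coeHom : E →⋆ₙₐ[ℂ] 𝓜(ℂ, E)) b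

theorem coe_mul_coe (b c : E) : ((b * c : E) : 𝓜(ℂ, E)) = b * c :=
  map_mul (coeHom : E →⋆ₙₐ[ℂ] 𝓜(ℂ, E)) b c

theorem coe_sum {ι : Type*} (s : Finset ι) (v : ι → E) :
    ((∑ i ∈ s, v i : E) : 𝓜(ℂ, E)) = ∑ i ∈ s, (v i : 𝓜(ℂ, E)) :=
  map_sum (coeHom : E →⋆ₙₐ[ℂ] 𝓜(ℂ, E)) v s

theorem fst_mul (T : 𝓜(ℂ, E)) (b c : E) : T.fst (b * c) = T.fst b * c := by
  set d := T.fst (b * c) - T.fst b * c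
  have hd : ∀ x, x * d = 0 := fun x => by
    rw [mul_sub, ← T.central, ← mul_assoc, T.central, mul_assoc, sub_self]
  exact sub_eq_zero.mp ((CStarRing.star_mul_self_eq_zero_iff d).mp (hd _))

theorem snd_mul (T : 𝓜(ℂ, E)) (b c : E) : T.snd (b * c) = b * T.snd c := by
  set d := T.snd (b * c) - b * T.snd c
  have hd : ∀ x, d * x = 0 := fun x => by
    rw [sub_mul, T.central, mul_assoc, ← T.central, ← mul_assoc, sub_self]
  exact sub_eq_zero.mp ((CStarRing.mul_star_self_eq_zero_iff d).mp (hd _))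

theorem mul_coe_eq_coe_fst (T : 𝓜(ℂ, E)) (b : E) : T * (b : 𝓜(ℂ, E)) = (T.fst b : 𝓜(ℂ, E)) :=
  ext _ _ _ _ <| Prod.ext (ContinuousLinearMap.ext fun c => T.fst_mul b c)
    (ContinuousLinearMap.ext fun c => T.central c b)

theorem coe_mul_eq_coe_snd (b : E) (T : 𝓜(ℂ, E)) : (b : 𝓜(ℂ, E)) * T = (T.snd b : 𝓜(ℂ, E)) :=
  ext _ _ _ _ <| Prod.ext (ContinuousLinearMap.ext fun c => (T.central b c).symm)
    (ContinuousLinearMap.ext fun c => T.snd_mul c b)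

theorem norm_le_of_forall_norm_mul_coe_le {T : 𝓜(ℂ, E)} {C : ℝ} (hC : 0 ≤ C)
    (h : ∀ b : E, ‖T * (b : 𝓜(ℂ, E))‖ ≤ C * ‖b‖) : ‖T‖ ≤ C := by
  rw [← norm_fst]
  exact ContinuousLinearMap.opNorm_le_bound _ hC fun b => by
    simpa only [mul_coe_eq_coe_fst, norm_coe] using h b

theorem isometry_coe : Isometry (fun b : E => (b : 𝓜(ℂ, E))) :=
  AddMonoidHomClass.isometry_of_norm (coeHom : E →⋆ₙₐ[ℂ] 𝓜(ℂ, E)) norm_coe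

theorem cauchySeq_coe_iff {u : ℕ → E} : CauchySeq (fun n => (u n : 𝓜(ℂ, E))) ↔ CauchySeq u := by
  rw [CauchySeq, ← Function.comp_def, ← Filter.map_map,
    isometry_coe.isUniformInducing.cauchy_map_iff]
  rfl

theorem norm_le_one_of_forall_conj_le [PartialOrder 𝓜(ℂ, E)] [StarOrderedRing 𝓜(ℂ, E)]
    {P : 𝓜(ℂ, E)} (hP : 0 ≤ P)
    (h : ∀ b : E, star (b : 𝓜(ℂ, E)) * P * b ≤ star (b : 𝓜(ℂ, E)) * b) : ‖P‖ ≤ 1 := by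
  obtain ⟨d, hd0, rfl⟩ : ∃ d, 0 ≤ d ∧ d * d = P :=
    ⟨CFC.sqrt P, CFC.sqrt_nonneg P, CFC.sqrt_mul_sqrt_self P hP⟩
  have hd_conj : ∀ b : E, star (d * b) * (d * b) = star (b : 𝓜(ℂ, E)) * (d * d) * b := fun b => by
    rw [star_mul, hd0.isSelfAdjoint.star_eq]
    simp only [mul_assoc]
  have hd : ‖d‖ ≤ 1 := norm_le_of_forall_norm_mul_coe_le zero_le_one fun b => by
    rw [one_mul, ← norm_coe b, ← sq_le_sq₀ (norm_nonneg _) (norm_nonneg _), sq, sq,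
      ← CStarRing.norm_star_mul_self, ← CStarRing.norm_star_mul_self, hd_conj]
    exact CStarAlgebra.norm_le_norm_of_nonneg_of_le (hd_conj b ▸ star_mul_self_nonneg _) (h b)
  exact (norm_mul_le d d).trans (mul_le_one₀ hd (norm_nonneg d) hd)

end DoubleCentralizer

section StrictTendsto

open DoubleCentralizer

variable {E : Type*} [NonUnitalCStarAlgebra E] {s : ℕ → 𝓜(ℂ, E)} {T : 𝓜(ℂ, E)}

theorem strictTendsto_iff_tendsto_fst_snd :
    StrictTendsto s T ↔ ∀ b : E, Tendsto (fun n => (s n).fst b) atTop (𝓝 (T.fst b)) ∧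
      Tendsto (fun n => (s n).snd b) atTop (𝓝 (T.snd b)) := by
  simp only [StrictTendsto, mul_coe_eq_coe_fst, coe_mul_eq_coe_snd, norm_coe, sub_fst, sub_snd,
    FunLike.coe_sub, Pi.sub_apply]
  exact forall_congr' fun b =>
    (and_congr tendsto_iff_norm_sub_tendsto_zero tendsto_iff_norm_sub_tendsto_zero).symm

theorem StrictTendsto.tendsto_mul_coe (h : StrictTendsto s T) (b : E) :
    Tendsto (fun n => s n * (b : 𝓜(ℂ, E))) atTop (𝓝 (T * b)) := by
  rw [tendsto_iff_norm_sub_tendsto_zero]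
  simpa only [sub_mul] using (h b).1

theorem StrictTendsto.tendsto_coe_mul (h : StrictTendsto s T) (b : E) :
    Tendsto (fun n => (b : 𝓜(ℂ, E)) * s n) atTop (𝓝 (b * T)) := by
  rw [tendsto_iff_norm_sub_tendsto_zero]
  simpa only [mul_sub] using (h b).2

theorem StrictTendsto.sub_const (h : StrictTendsto s T) (c : 𝓜(ℂ, E)) :
    StrictTendsto (fun n => s n - c) (T - c) := by
  simpa only [StrictTendsto, sub_sub_sub_cancel_right] using h

theorem StrictTendsto.norm_le {C : ℝ} (h : StrictTendsto s T) (hs : ∀ᶠ n in atTop, ‖s n‖ ≤ C) :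
    ‖T‖ ≤ C := by
  obtain ⟨n, hn⟩ := hs.exists
  refine norm_le_of_forall_norm_mul_coe_le ((norm_nonneg _).trans hn) fun b => ?_
  refine le_of_tendsto (h.tendsto_mul_coe b).norm (hs.mono fun n hn => ?_)
  calc ‖s n * (b : 𝓜(ℂ, E))‖ ≤ ‖s n‖ * ‖b‖ := norm_coe b ▸ norm_mul_le _ _
    _ ≤ C * ‖b‖ := mul_le_mul_of_nonneg_right hn (norm_nonneg b)

theorem exists_strictTendsto_of_cauchySeq
    (hL : ∀ b : E, CauchySeq fun n => s n * (b : 𝓜(ℂ, E)))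
    (hR : ∀ b : E, CauchySeq fun n => (b : 𝓜(ℂ, E)) * s n) : ∃ T, StrictTendsto s T := by
  simp only [mul_coe_eq_coe_fst, coe_mul_eq_coe_snd] at hL hR
  choose L hL using fun b => cauchySeq_tendsto_of_complete (cauchySeq_coe_iff.mp (hL b))
  choose R hR using fun b => cauchySeq_tendsto_of_complete (cauchySeq_coe_iff.mp (hR b))
  let T : 𝓜(ℂ, E) :=
    { fst := continuousLinearMapOfTendsto (fun n => (s n).fst) (tendsto_pi_nhds.mpr hL)
      snd := continuousLinearMapOfTendsto (fun n => (s n).snd) (tendsto_pi_nhds.mpr hR)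
      central := fun x y => tendsto_nhds_unique ((hR x).mul_const y)
        (((hL y).const_mul x).congr fun n => ((s n).central x y).symm) }
  exact ⟨T, strictTendsto_iff_tendsto_fst_snd.mpr fun b => ⟨hL b, hR b⟩⟩

section Order

variable [PartialOrder 𝓜(ℂ, E)] [StarOrderedRing 𝓜(ℂ, E)]

theorem StrictTendsto.norm_sum_Ico_le_one {p : ℕ → 𝓜(ℂ, E)} (hp : ∀ n, 0 ≤ p n)
    (h : StrictTendsto (fun N => ∑ n ∈ range N, p n) 1) (Q P : ℕ) :
    ‖∑ n ∈ Ico Q P, p n‖ ≤ 1 := by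
  have hmono : Monotone fun N => ∑ n ∈ range N, p n := fun M N hMN =>
    sum_le_sum_of_subset_of_nonneg (range_subset_range.mpr hMN) fun n _ _ => hp n
  have hrange : ‖∑ n ∈ range P, p n‖ ≤ 1 :=
    norm_le_one_of_forall_conj_le (sum_nonneg fun n _ => hp n) fun b => by
      have hlim := (h.tendsto_mul_coe b).const_mul (star (b : 𝓜(ℂ, E)))
      simp only [one_mul, ← mul_assoc] at hlim
      exact Monotone.ge_of_tendsto (fun M N hMN => star_left_conjugate_le_conjugate (hmono hMN) _)
        hlim P
  refine le_trans (CStarAlgebra.norm_le_norm_of_nonneg_of_le (sum_nonneg fun n _ => hp n) ?_)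
    hrange
  rw [range_eq_Ico]
  exact sum_le_sum_of_subset_of_nonneg (Ico_subset_Ico_left (Nat.zero_le Q)) fun n _ _ => hp n

theorem exists_strictTendsto_sum_mul_mul {x y a : ℕ → 𝓜(ℂ, E)}
    (hx : ∀ Q P, ‖∑ n ∈ Ico Q P, x n * star (x n)‖ ≤ 1)
    (hy : ∀ Q P, ‖∑ n ∈ Ico Q P, star (y n) * y n‖ ≤ 1)
    (hx_strict : ∀ b : E, CauchySeq fun N => (b : 𝓜(ℂ, E)) * ∑ n ∈ range N, x n * star (x n))
    (hy_strict : ∀ b : E, CauchySeq fun N => (∑ n ∈ range N, star (y n) * y n) * (b : 𝓜(ℂ, E)))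
    {C : ℝ} (ha : ∀ n, ‖a n‖ ≤ C) :
    ∃ T, StrictTendsto (fun N => ∑ n ∈ range N, x n * a n * y n) T := by
  refine exists_strictTendsto_of_cauchySeq (fun b => ?_) (fun b => ?_)
  · refine cauchySeq_of_norm_sub_sq_le (hy_strict b) (by positivity : 0 ≤ C ^ 2 * ‖b‖)
      fun Q P hQP => ?_
    simp only [← sum_Ico_eq_sub _ hQP, sum_mul, mul_assoc]
    have hyb : ‖∑ n ∈ Ico Q P, star (y n * b) * (y n * b)‖ ≤
        ‖b‖ * ‖∑ n ∈ Ico Q P, star (y n) * (y n * b)‖ := by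
      simp only [star_mul, mul_assoc, ← mul_sum]
      exact (norm_mul_le _ _).trans_eq (by rw [norm_star, norm_coe])
    calc ‖∑ n ∈ Ico Q P, x n * (a n * (y n * b))‖ ^ 2
        ≤ C ^ 2 * ‖∑ n ∈ Ico Q P, x n * star (x n)‖ *
            ‖∑ n ∈ Ico Q P, star (y n * b) * (y n * b)‖ := by
          simpa only [mul_assoc] using CStarAlgebra.norm_sum_mul_mul_sq_le _ x a (fun n => y n * b)
            fun n _ => ha n
      _ ≤ C ^ 2 * 1 * (‖b‖ * ‖∑ n ∈ Ico Q P, star (y n) * (y n * b)‖) :=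
          mul_le_mul (mul_le_mul_of_nonneg_left (hx Q P) (sq_nonneg C)) hyb (norm_nonneg _)
            (by positivity)
      _ = _ := by ring
  · refine cauchySeq_of_norm_sub_sq_le (hx_strict b) (by positivity : 0 ≤ C ^ 2 * ‖b‖)
      fun Q P hQP => ?_
    simp only [← sum_Ico_eq_sub _ hQP, mul_sum]
    have hxb : ‖∑ n ∈ Ico Q P, b * x n * star (b * x n)‖ ≤
        ‖(b : 𝓜(ℂ, E)) * ∑ n ∈ Ico Q P, x n * star (x n)‖ * ‖b‖ := by
      simp only [star_mul, ← mul_assoc, ← sum_mul, mul_sum]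
      exact (norm_mul_le _ _).trans_eq (by rw [norm_star, norm_coe])
    calc ‖∑ n ∈ Ico Q P, b * (x n * a n * y n)‖ ^ 2
        ≤ C ^ 2 * ‖∑ n ∈ Ico Q P, b * x n * star (b * x n)‖ *
            ‖∑ n ∈ Ico Q P, star (y n) * y n‖ := by
          simpa only [mul_assoc] using
            CStarAlgebra.norm_sum_mul_mul_sq_le _ (fun n => b * x n) a y fun n _ => ha n
      _ ≤ C ^ 2 * (‖(b : 𝓜(ℂ, E)) * ∑ n ∈ Ico Q P, x n * star (x n)‖ * ‖b‖) * 1 :=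
          mul_le_mul (mul_le_mul_of_nonneg_left hxb (sq_nonneg C)) (hy Q P) (norm_nonneg _)
            (by positivity)
      _ = _ := by rw [← mul_sum]; ring

theorem StrictTendsto.norm_sub_sum_range_le {x y a : ℕ → 𝓜(ℂ, E)}
    (hT : StrictTendsto (fun N => ∑ n ∈ range N, x n * a n * y n) T)
    (hx : ∀ Q P, ‖∑ n ∈ Ico Q P, x n * star (x n)‖ ≤ 1)
    (hy : ∀ Q P, ‖∑ n ∈ Ico Q P, star (y n) * y n‖ ≤ 1) {N₀ : ℕ} {C : ℝ} (hC : 0 ≤ C)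
    (ha : ∀ n ≥ N₀, ‖a n‖ ≤ C) : ‖T - ∑ n ∈ range N₀, x n * a n * y n‖ ≤ C := by
  refine (hT.sub_const _).norm_le (eventually_atTop.mpr ⟨N₀, fun P hP => ?_⟩)
  rw [← sum_Ico_eq_sub _ hP]
  exact CStarAlgebra.norm_sum_mul_mul_le _ (hx _ _) (hy _ _) hC fun n hn => ha n (mem_Ico.mp hn).1

theorem exists_strictTendsto_sum_mul_mul_shiftSeq {x a : ℕ → 𝓜(ℂ, E)}
    (hx_sa : ∀ n, IsSelfAdjoint (x n)) (hx : StrictTendsto (fun N => ∑ n ∈ range N, x n * x n) 1)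
    (k : ℤ) {M : ℝ} (ha : ∀ n, ‖a n‖ ≤ M) :
    ∃ T, StrictTendsto (fun N => ∑ n ∈ range N, x n * a n * shiftSeq x k n) T ∧
      ∀ (N₀ : ℕ) (C : ℝ), 0 ≤ C → (∀ n ≥ N₀, ‖a n‖ ≤ C) →
        ‖T - ∑ n ∈ range N₀, x n * a n * shiftSeq x k n‖ ≤ C := by
  have hxx : ∀ n, x n * star (x n) = x n * x n := fun n => by rw [(hx_sa n).star_eq]
  have hyy : ∀ n, star (shiftSeq x k n) * shiftSeq x k n = shiftSeq (fun m => x m * x m) k n :=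
    fun n => by
      simpa only [(hx_sa _).star_eq] using apply_shiftSeq (fun z => star z * z) (by simp) x k n
  have hx_le : ∀ Q P, ‖∑ n ∈ Ico Q P, x n * x n‖ ≤ 1 :=
    hx.norm_sum_Ico_le_one fun n => hxx n ▸ mul_star_self_nonneg (x n)
  have hy_le : ∀ Q P, ‖∑ n ∈ Ico Q P, star (shiftSeq x k n) * shiftSeq x k n‖ ≤ 1 :=
    fun Q P => by simpa only [hyy, sum_Ico_shiftSeq] using hx_le _ _
  have hx_strict : ∀ b : E, CauchySeq fun N => (b : 𝓜(ℂ, E)) * ∑ n ∈ range N, x n * star (x n) :=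
    fun b => by simpa only [hxx, mul_one] using (hx.tendsto_coe_mul b).cauchySeq
  have hy_strict : ∀ b : E,
      CauchySeq fun N => (∑ n ∈ range N, star (shiftSeq x k n) * shiftSeq x k n) * (b : 𝓜(ℂ, E)) :=
    fun b => by
      simp only [hyy, sum_mul, apply_shiftSeq (· * (b : 𝓜(ℂ, E))) (zero_mul _)]
      exact CauchySeq.sum_range_shiftSeq (by simpa only [sum_mul] using
        (hx.tendsto_mul_coe b).cauchySeq) k
  obtain ⟨T, hT⟩ := exists_strictTendsto_sum_mul_mul (by simpa only [hxx] using hx_le) hy_le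
    hx_strict hy_strict ha
  exact ⟨T, hT, fun N₀ C hC ha' => hT.norm_sub_sum_range_le (by simpa only [hxx] using hx_le)
    hy_le hC ha'⟩

end Order

end StrictTendsto

theorem strict_sum_shift_estimate_general
    {E : Type*} [NonUnitalCStarAlgebra E]
    (f : ℕ → E) (hf : ∀ n, (∃ b, f n = star b * b) ∧ ‖f n‖ ≤ 1)
    (hsum : StrictTendsto (fun N => ((∑ n ∈ Finset.range N, f n * f n : E) : 𝓜(ℂ, E))) 1)
    (k : ℤ) (a : ℕ → 𝓜(ℂ, E)) (M : ℝ) (hM : ∀ n, ‖a n‖ ≤ M) :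
    ∃ T : 𝓜(ℂ, E),
      StrictTendsto (fun N => ∑ n ∈ Finset.range N,
        (f n : 𝓜(ℂ, E)) * a n *
          ((if 0 ≤ (n : ℤ) + k then f ((n : ℤ) + k).toNat else 0 : E) : 𝓜(ℂ, E))) T ∧
      ‖T‖ ≤ ⨆ n, ‖a n‖ ∧
      ∀ η > (0 : ℝ), ∃ x : E,
        ‖T - (x : 𝓜(ℂ, E))‖ ≤ Filter.limsup (fun n => ‖a n‖) atTop + η := by
  -- `𝓜(ℂ, E)` has no global order instance; every C⋆-algebra carries its spectral order.
  let _ := CStarAlgebra.spectralOrder 𝓜(ℂ, E)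
  have _ := CStarAlgebra.spectralOrderedRing 𝓜(ℂ, E)
  have hf_sa : ∀ n, IsSelfAdjoint (f n : 𝓜(ℂ, E)) := fun n => by
    obtain ⟨b, hb⟩ := (hf n).1
    rw [hb, DoubleCentralizer.coe_mul_coe, DoubleCentralizer.coe_star]
    exact .star_mul_self _
  have hshift : ∀ n : ℕ, ((shiftSeq f k n : E) : 𝓜(ℂ, E)) =
      shiftSeq (fun m => (f m : 𝓜(ℂ, E))) k n :=
    apply_shiftSeq _ DoubleCentralizer.coe_zero f k
  simp only [← shiftSeq.eq_1, hshift]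
  obtain ⟨T, hT, hT_le⟩ := exists_strictTendsto_sum_mul_mul_shiftSeq hf_sa
    (by simpa only [DoubleCentralizer.coe_sum, DoubleCentralizer.coe_mul_coe] using hsum) k hM
  have hbdd : BddAbove (Set.range fun n => ‖a n‖) := ⟨M, Set.forall_mem_range.mpr hM⟩
  refine ⟨T, hT, ?_, fun η hη => ?_⟩
  · simpa only [range_zero, sum_empty, sub_zero] using
      hT_le 0 _ (Real.iSup_nonneg fun n => norm_nonneg _) fun n _ => le_ciSup hbdd n
  obtain ⟨N₀, hN₀⟩ := eventually_atTop.mp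
    (eventually_lt_of_limsup_lt (lt_add_of_pos_right _ hη) (isBoundedUnder_of ⟨M, hM⟩))
  refine ⟨∑ n ∈ range N₀, ((f n : 𝓜(ℂ, E)) * a n).fst (shiftSeq f k n), ?_⟩
  rw [DoubleCentralizer.coe_sum]
  simp only [← DoubleCentralizer.mul_coe_eq_coe_fst, hshift]
  exact hT_le N₀ _ ((norm_nonneg _).trans (hN₀ N₀ le_rfl).le) fun n hn => (hN₀ n hn).le

/-- If `E` is σ-unital, `(fₙ)` are positive contractions in `E` with `Σ fₙ²` strictly
convergent to `1` and `fₘfₙ = 0` for `|m - n| ≥ 2`, then for every `k ∈ ℤ` and bounded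
`(aₙ)` in `𝓜(ℂ, E)` the sum `Σ fₙ aₙ f_{n+k}` converges strictly to an element of norm at
most `supₙ ‖aₙ‖`, whose image in the corona `𝓜(ℂ, E)/E` has norm at most `limsupₙ ‖aₙ‖`
(the corona norm being the distance to `E`). -/
theorem strict_sum_shift_estimate
    {E : Type*} [NonUnitalCStarAlgebra E] (u : ℕ → E) (hu : IsApproxUnit u)
    (f : ℕ → E) (hf : ∀ n, (∃ b, f n = star b * b) ∧ ‖f n‖ ≤ 1)
    (hsum : StrictTendsto (fun N => ((∑ n ∈ Finset.range N, f n * f n : E) : 𝓜(ℂ, E))) 1)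
    (horth : ∀ m n, m + 2 ≤ n ∨ n + 2 ≤ m → f m * f n = 0)
    (k : ℤ) (a : ℕ → 𝓜(ℂ, E)) (M : ℝ) (hM : ∀ n, ‖a n‖ ≤ M) :
    ∃ T : 𝓜(ℂ, E),
      StrictTendsto (fun N => ∑ n ∈ Finset.range N,
        (f n : 𝓜(ℂ, E)) * a n *
          ((if 0 ≤ (n : ℤ) + k then f ((n : ℤ) + k).toNat else 0 : E) : 𝓜(ℂ, E))) T ∧
      ‖T‖ ≤ ⨆ n, ‖a n‖ ∧
      ∀ η > (0 : ℝ), ∃ x : E,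
        ‖T - (x : 𝓜(ℂ, E))‖ ≤ Filter.limsup (fun n => ‖a n‖) atTop + η :=
  strict_sum_shift_estimate_general f hf hsum k a M hM
end

section
/- Let A be a non-unital σ-unital C*-algebra with a strictly positive contraction e ∈ A. Then T = (1 − e)^{1/2} ∈ M(A) has norm one, but φ̃(T²) < 1 for every state φ on A (where φ̃ is the unique state extension to M(A)). In particular, the supremum ‖T‖ = sup_φ φ̃(T*T)^{1/2} is not attained. -/
/-!
Since `0 ≤ e ≤ 1`, also `0 ≤ 1 - e ≤ 1`, so `‖1 - e‖ ≤ 1`. If the inequality were strict, `e`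
would be invertible in `M(A)`; as `A` is an ideal in `M(A)`, the element `e⁻¹ e = 1` would then
lie in `A`, which is not unital. Hence `‖T‖² = ‖T * T‖ = ‖1 - e‖ = 1`. On the other hand
`φ̃(T²) = φ̃(1) - φ(e) ≤ 1 - φ(e) < 1`, because `e` is strictly positive.
-/

open scoped ComplexOrder MultiplierAlgebra

/-- A state on a (possibly non-unital) C*-algebra: a positive linear functional of norm one. -/
def IsState {A : Type*} [NonUnitalCStarAlgebra A] (φ : A →L[ℂ] ℂ) : Prop :=
  ‖φ‖ = 1 ∧ ∀ a : A, 0 ≤ φ (star a * a)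

namespace DoubleCentralizer

section NontriviallyNormed

variable {𝕜 A : Type*} [NontriviallyNormedField 𝕜] [NonUnitalNormedRing A] [NormedSpace 𝕜 A]
  [SMulCommClass 𝕜 A A] [IsScalarTower 𝕜 A A] [StarRing A] [CStarRing A]

theorem fst_mul_right (m : 𝓜(𝕜, A)) (a x : A) : m.fst (a * x) = m.fst a * x := by
  have hann : ∀ z : A, z * (m.fst (a * x) - m.fst a * x) = 0 := fun z => by
    rw [mul_sub, ← mul_assoc, ← m.central, ← m.central, mul_assoc, sub_self]
  exact sub_eq_zero.1 <| (CStarRing.star_mul_self_eq_zero_iff _).1 (hann _)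

theorem mul_coe (m : 𝓜(𝕜, A)) (a : A) : m * (a : 𝓜(𝕜, A)) = (m.fst a : 𝓜(𝕜, A)) := by
  ext x
  · simp [fst_mul_right]
  · simp [m.central]

theorem exists_two_sided_identity_of_isUnit_coe {a : A} (ha : IsUnit (a : 𝓜(𝕜, A))) :
    ∃ u : A, ∀ x : A, u * x = x ∧ x * u = x := by
  obtain ⟨m, hm⟩ := ha.exists_left_inv
  have hu : (m.fst a : 𝓜(𝕜, A)) = 1 := by rw [← mul_coe, hm]
  refine ⟨m.fst a, fun x => ⟨?_, ?_⟩⟩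
  · simpa using congrArg (fun n : 𝓜(𝕜, A) => n.fst x) hu
  · simpa using congrArg (fun n : 𝓜(𝕜, A) => n.snd x) hu

end NontriviallyNormed

theorem norm_coe_s7 {𝕜 A : Type*} [DenselyNormedField 𝕜] [NonUnitalNormedRing A] [NormedSpace 𝕜 A]
    [SMulCommClass 𝕜 A A] [IsScalarTower 𝕜 A A] [StarRing A] [CStarRing A] (a : A) :
    ‖(a : 𝓜(𝕜, A))‖ = ‖a‖ := by
  rw [← norm_fst, coe_fst, ContinuousLinearMap.opNorm_mul_apply]

end DoubleCentralizer

theorem CStarAlgebra.norm_one_sub_of_not_isUnit {B : Type*} [CStarAlgebra B] [PartialOrder B]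
    [StarOrderedRing B] {b : B} (hb₀ : 0 ≤ b) (hb₁ : ‖b‖ ≤ 1) (hb : ¬ IsUnit b) :
    ‖1 - b‖ = 1 := by
  refine le_antisymm ?_ (le_of_not_gt fun h => hb (by simpa using isUnit_one_sub_of_norm_lt_one h))
  have hle : b ≤ 1 := (norm_le_one_iff_of_nonneg b).1 hb₁
  exact (norm_le_one_iff_of_nonneg (1 - b) (sub_nonneg.2 hle)).2 (sub_le_self 1 hb₀)

theorem IsState.re_apply_one_le {B : Type*} [CStarAlgebra B] {ψ : B →L[ℂ] ℂ} (hψ : IsState ψ) :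
    (ψ 1).re ≤ 1 := by
  obtain hB | hB := subsingleton_or_nontrivial B
  · simp [Subsingleton.elim (1 : B) 0]
  calc (ψ 1).re ≤ ‖ψ 1‖ := Complex.re_le_norm _
    _ ≤ ‖ψ‖ * ‖(1 : B)‖ := ψ.le_opNorm 1
    _ ≤ 1 := by rw [hψ.1, one_mul, norm_one]

/-- If `A` is a non-unital σ-unital C*-algebra with a strictly positive contraction `e`,
then `T = (1 - e)^{1/2} ∈ 𝓜(ℂ, A)` has norm one, but `φ̃(T²) < 1` for every state `φ` of
`A` (with unique state extension `φ̃` to `𝓜(ℂ, A)`); so the supremum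
`‖T‖ = sup_φ φ̃(T*T)^{1/2}` is not attained. -/
theorem norm_sup_not_attained {A : Type*} [NonUnitalCStarAlgebra A]
    (hnu : ¬ ∃ u : A, ∀ a : A, u * a = a ∧ a * u = a)
    (e : A) (hpos : ∃ b : A, e = star b * b) (hcontr : ‖e‖ ≤ 1)
    (hstrict : ∀ φ : A →L[ℂ] ℂ, IsState φ → 0 < (φ e).re)
    (T : 𝓜(ℂ, A)) (hTsa : star T = T) (hTsq : T * T = 1 - (e : 𝓜(ℂ, A))) :
    ‖T‖ = 1 ∧
    ∀ (φ : A →L[ℂ] ℂ) (ψ : 𝓜(ℂ, A) →L[ℂ] ℂ), IsState φ → IsState ψ →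
      (∀ a : A, ψ (a : 𝓜(ℂ, A)) = φ a) → (ψ (T * T)).re < 1 := by
  -- `𝓜(ℂ, A)` carries no global order instance; use the spectral one.
  let _ : PartialOrder 𝓜(ℂ, A) := CStarAlgebra.spectralOrder _
  let _ : StarOrderedRing 𝓜(ℂ, A) := CStarAlgebra.spectralOrderedRing _
  have he_nonneg : 0 ≤ (e : 𝓜(ℂ, A)) := by
    obtain ⟨b, rfl⟩ := hpos
    have := star_mul_self_nonneg (DoubleCentralizer.coeHom (𝕜 := ℂ) b)
    rwa [← map_star, ← map_mul] at this
  have he_not_unit : ¬ IsUnit (e : 𝓜(ℂ, A)) := fun he =>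
    hnu (DoubleCentralizer.exists_two_sided_identity_of_isUnit_coe he)
  have hnorm : ‖1 - (e : 𝓜(ℂ, A))‖ = 1 := CStarAlgebra.norm_one_sub_of_not_isUnit he_nonneg
    (by rwa [DoubleCentralizer.norm_coe_s7]) he_not_unit
  refine ⟨?_, fun φ ψ hφ hψ hext => ?_⟩
  · have hT : ‖T‖ * ‖T‖ = 1 := by rw [← CStarRing.norm_star_mul_self, hTsa, hTsq, hnorm]
    nlinarith [norm_nonneg T]
  · have hψT : ψ (T * T) = ψ 1 - φ e := by rw [hTsq, map_sub, hext]
    rw [hψT, Complex.sub_re]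
    linarith [hψ.re_apply_one_le, hstrict φ hφ]
end

section
/- Let Γ be a finitely generated group with property (T). Then for each finite-dimensional Hilbert space H, there are only finitely many pairwise inequivalent irreducible unitary representations of Γ on H. Consequently, if Γ admits infinitely many pairwise inequivalent finite-dimensional irreducible representations ρₙ on Hilbert spaces Hₙ, they can be enumerated so that the dimensions mₙ = dim(Hₙ) form a nondecreasing sequence tending to infinity. -/
open Filter Matrix

/-- `(F, ε)` is a Kazhdan pair for `Γ`. -/
def IsKazhdanPair (Γ : Type*) [Group Γ] (F : Finset Γ) (ε : ℝ) : Prop :=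
  ∀ (H : Type) (_ : NormedAddCommGroup H) (_ : InnerProductSpace ℂ H) (_ : CompleteSpace H)
    (ρ : Γ →* (H ≃ₗᵢ[ℂ] H)) (ξ : H), ξ ≠ 0 →
    (∀ g ∈ F, ‖ρ g ξ - ξ‖ < ε * ‖ξ‖) →
    ∃ η : H, η ≠ 0 ∧ ∀ g : Γ, ρ g η = η

/-- `Γ` has property (T). -/
def HasPropertyT (Γ : Type*) [Group Γ] : Prop :=
  ∃ (F : Finset Γ) (ε : ℝ), 0 < ε ∧ IsKazhdanPair Γ F ε

/-- Irreducibility of a finite-dimensional unitary representation (Schur commutant form). -/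
def MatIrreducible {Γ : Type*} [Group Γ] {m : ℕ}
    (ρ : Γ →* Matrix.unitaryGroup (Fin m) ℂ) : Prop :=
  ∀ M : Matrix (Fin m) (Fin m) ℂ,
    (∀ g : Γ, (ρ g : Matrix (Fin m) (Fin m) ℂ) * M = M * (ρ g : Matrix (Fin m) (Fin m) ℂ)) →
    ∃ c : ℂ, M = c • (1 : Matrix (Fin m) (Fin m) ℂ)

/-- Unitary equivalence of two finite-dimensional unitary representations, formulated via a
(possibly rectangular) unitary intertwiner. -/
def MatEquiv {Γ : Type*} [Group Γ] {m₁ m₂ : ℕ}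
    (ρ₁ : Γ →* Matrix.unitaryGroup (Fin m₁) ℂ)
    (ρ₂ : Γ →* Matrix.unitaryGroup (Fin m₂) ℂ) : Prop :=
  ∃ U : Matrix (Fin m₂) (Fin m₁) ℂ, U * Uᴴ = 1 ∧ Uᴴ * U = 1 ∧
    ∀ g : Γ, U * (ρ₁ g : Matrix (Fin m₁) (Fin m₁) ℂ) = (ρ₂ g : Matrix (Fin m₂) (Fin m₂) ℂ) * U

/-!
If two irreducible unitary representations `ρ, σ` of the same dimension are close on the Kazhdan
set `F`, then the identity matrix is an almost invariant vector for the unitary representation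
`X ↦ ρ g * X * (σ g)ᴴ` on matrices with the Frobenius (Hilbert–Schmidt) norm. Property (T) then
yields a nonzero fixed matrix, i.e. an intertwiner, and Schur's lemma rescales it to a unitary
equivalence. By compactness of the unitary group, every infinite family of representations of a
fixed dimension has two members that are close on `F`. Hence each dimension carries only finitely
many members of a pairwise inequivalent irreducible family, and listing the family by increasing
dimension gives the enumeration.
-/

open WithLp

namespace Matrix.UnitaryGroup

variable {𝕜 : Type*} [RCLike 𝕜] {n : Type*} [Fintype n] [DecidableEq n]

noncomputable def toLinearIsometryEquiv :
    unitaryGroup n 𝕜 →* (EuclideanSpace 𝕜 n ≃ₗᵢ[𝕜] EuclideanSpace 𝕜 n) where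
  toFun U := Unitary.linearIsometryEquiv ⟨toEuclideanCLM (n := n) (𝕜 := 𝕜) U, Unitary.map_mem _ U.2⟩
  map_one' := (congrArg _ (Subtype.ext (map_one _))).trans (map_one _)
  map_mul' U V := by
    rw [← MulEquiv.map_mul]
    exact congrArg _ (Subtype.ext (map_mul _ _ _))

@[simp]
lemma toLinearIsometryEquiv_toLp (U : unitaryGroup n 𝕜) (x : n → 𝕜) :
    toLinearIsometryEquiv U (toLp 2 x) = toLp 2 ((U : Matrix n n 𝕜) *ᵥ x) :=
  rfl

end Matrix.UnitaryGroup

namespace Matrix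

open scoped Kronecker

variable {𝕜 : Type*} [RCLike 𝕜] {m n : Type*} [Fintype m] [DecidableEq m] [Fintype n]
  [DecidableEq n]

lemma norm_toLp_vec_mul_unitary (X : Matrix m n 𝕜) (U : unitaryGroup n 𝕜) :
    ‖toLp 2 (X * (U : Matrix n n 𝕜)).vec‖ = ‖toLp 2 X.vec‖ := by
  let V : unitaryGroup (n × m) 𝕜 :=
    ⟨(U : Matrix n n 𝕜)ᵀ ⊗ₖ 1, kronecker_mem_unitary (UnitaryGroup.transpose U).2 (one_mem _)⟩
  rw [← (UnitaryGroup.toLinearIsometryEquiv V).norm_map (toLp 2 X.vec),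
    UnitaryGroup.toLinearIsometryEquiv_toLp, kronecker_mulVec_vec, transpose_transpose,
    Matrix.one_mul]

variable {Γ : Type*} [Group Γ]

/-- The representation `ρ ⊗ σ̄` in the coordinates `vec X` of `m × n` matrices `X`. -/
noncomputable def linHomRep (σ : Γ →* unitaryGroup n 𝕜) (ρ : Γ →* unitaryGroup m 𝕜) :
    Γ →* unitaryGroup (n × m) 𝕜 where
  toFun g := ⟨(σ g).1.map star ⊗ₖ (ρ g).1,
    kronecker_mem_unitary (UnitaryGroup.map_star (σ g)).2 (ρ g).2⟩
  map_one' := Subtype.ext <| by simp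
  map_mul' g h := Subtype.ext <| by
    simp only [map_mul, Submonoid.coe_mul, ← mul_kronecker_mul]
    congr 1
    exact Matrix.map_mul (f := starRingEnd 𝕜)

lemma linHomRep_mulVec_vec (σ : Γ →* unitaryGroup n 𝕜) (ρ : Γ →* unitaryGroup m 𝕜) (g : Γ)
    (X : Matrix m n 𝕜) :
    (linHomRep σ ρ g).1 *ᵥ X.vec = ((ρ g).1 * X * (σ g).1ᴴ).vec :=
  kronecker_mulVec_vec _ _ _

end Matrix

section Schur

open ComplexOrder

variable {Γ : Type*} [Group Γ] {m n : Type*} [Fintype m] [DecidableEq m] [Fintype n]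
  [DecidableEq n]

lemma intertwines_conjTranspose {ρ : Γ →* unitaryGroup m ℂ} {σ : Γ →* unitaryGroup n ℂ}
    {X : Matrix m n ℂ} (hX : ∀ g, (ρ g).1 * X = X * (σ g).1) (g : Γ) :
    (σ g).1 * Xᴴ = Xᴴ * (ρ g).1 := by
  simpa [conjTranspose_mul, star_eq_conjTranspose] using (congrArg conjTranspose (hX g⁻¹)).symm

lemma exists_smul_mem_unitaryGroup {X : Matrix n n ℂ} (hX : X ≠ 0) {c : ℂ}
    (hc : Xᴴ * X = c • 1) : ∃ r : ℂ, r • X ∈ unitaryGroup n ℂ := by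
  obtain ⟨j⟩ : Nonempty n := not_isEmpty_iff.1 fun _ => hX (Subsingleton.elim _ _)
  have hc_nonneg : 0 ≤ c := by
    simpa [hc] using (posSemidef_conjTranspose_mul_self X).diag_nonneg (i := j)
  have hc_ne : c ≠ 0 := by
    rintro rfl
    exact hX (conjTranspose_mul_self_eq_zero.1 (by simpa using hc))
  obtain ⟨hre, him⟩ := Complex.pos_iff.1 (lt_of_le_of_ne hc_nonneg hc_ne.symm)
  obtain ⟨t, rfl⟩ : ∃ t : ℝ, c = t := ⟨c.re, Complex.ext rfl (by simp [← him])⟩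
  have ht : (√t)⁻¹ * (√t)⁻¹ * t = 1 := by
    rw [← mul_inv, Real.mul_self_sqrt (by simpa using hre.le),
      inv_mul_cancel₀ (by simpa using hre.ne')]
  refine ⟨((√t)⁻¹ : ℝ), ?_⟩
  rw [mem_unitaryGroup_iff', star_eq_conjTranspose, conjTranspose_smul, Matrix.smul_mul,
    Matrix.mul_smul, hc, smul_smul, smul_smul, Complex.star_def, Complex.conj_ofReal]
  norm_cast
  rw [ht, one_smul]

lemma MatIrreducible.matEquiv_of_intertwines {k : ℕ} {ρ σ : Γ →* unitaryGroup (Fin k) ℂ}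
    (hσ : MatIrreducible σ) {X : Matrix (Fin k) (Fin k) ℂ} (hX : X ≠ 0)
    (hXρσ : ∀ g, (ρ g).1 * X = X * (σ g).1) : MatEquiv σ ρ := by
  obtain ⟨c, hc⟩ := hσ (Xᴴ * X) fun g => by
    rw [← Matrix.mul_assoc, intertwines_conjTranspose hXρσ, Matrix.mul_assoc, hXρσ,
      Matrix.mul_assoc]
  obtain ⟨r, hr⟩ := exists_smul_mem_unitaryGroup hX hc
  exact ⟨r • X, hr.2, hr.1, fun g => by rw [Matrix.smul_mul, Matrix.mul_smul, hXρσ]⟩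

end Schur

lemma exists_ne_dist_lt_of_isCompact {X : Type*} [PseudoMetricSpace X] {s : Set X}
    (hs : IsCompact s) {u : ℕ → X} (hu : ∀ n, u n ∈ s) {ε : ℝ} (hε : 0 < ε) :
    ∃ i j, i ≠ j ∧ dist (u i) (u j) < ε := by
  obtain ⟨x, -, φ, hφ, hlim⟩ := hs.tendsto_subseq hu
  obtain ⟨N, hN⟩ := Metric.cauchySeq_iff.1 hlim.cauchySeq ε hε
  exact ⟨φ (N + 1), φ N, (hφ N.lt_succ_self).ne', hN _ (Nat.le_succ N) _ le_rfl⟩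

namespace IsKazhdanPair

variable {Γ : Type*} [Group Γ] {F : Finset Γ} {ε : ℝ}

lemma exists_intertwines (hK : IsKazhdanPair Γ F ε) {m : ℕ} [NeZero m]
    (ρ σ : Γ →* unitaryGroup (Fin m) ℂ)
    (hclose : ∀ g ∈ F, ‖toLp 2 ((ρ g).1 - (σ g).1).vec‖ <
      ε * ‖toLp 2 (1 : Matrix (Fin m) (Fin m) ℂ).vec‖) :
    ∃ X : Matrix (Fin m) (Fin m) ℂ, X ≠ 0 ∧ ∀ g, (ρ g).1 * X = X * (σ g).1 := by
  let π := UnitaryGroup.toLinearIsometryEquiv.comp (linHomRep σ ρ)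
  have hπ : ∀ g (X : Matrix (Fin m) (Fin m) ℂ),
      π g (toLp 2 X.vec) = toLp 2 ((ρ g).1 * X * (σ g).1ᴴ).vec :=
    fun g X => congrArg (toLp 2) (linHomRep_mulVec_vec σ ρ g X)
  have hξ : toLp 2 (1 : Matrix (Fin m) (Fin m) ℂ).vec ≠ 0 := by
    simp [vec_eq_zero_iff]
  obtain ⟨η, hη, hfix⟩ := hK _ inferInstance inferInstance inferInstance π _ hξ fun g hg =>
    calc ‖π g (toLp 2 (1 : Matrix (Fin m) (Fin m) ℂ).vec) - toLp 2 (1 : Matrix _ _ ℂ).vec‖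
        = ‖toLp 2 (((ρ g).1 - (σ g).1) * (σ g).1ᴴ).vec‖ := by
          rw [hπ, ← toLp_sub, ← vec_sub, Matrix.sub_mul, Matrix.mul_one, ← star_eq_conjTranspose,
            Unitary.mul_star_self_of_mem (σ g).2]
      _ = ‖toLp 2 ((ρ g).1 - (σ g).1).vec‖ := norm_toLp_vec_mul_unitary _ (σ g)⁻¹
      _ < _ := hclose g hg
  obtain ⟨X, rfl⟩ : ∃ X : Matrix (Fin m) (Fin m) ℂ, toLp 2 X.vec = η :=
    ⟨_, by rw [(vec_bijective.2 (ofLp η)).choose_spec, toLp_ofLp]⟩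
  refine ⟨X, by rintro rfl; simp at hη, fun g => ?_⟩
  have hXg : (ρ g).1 * X * (σ g).1ᴴ = X := by
    simpa [hπ, vec_inj] using hfix g
  calc (ρ g).1 * X = (ρ g).1 * X * ((σ g).1ᴴ * (σ g).1) := by
        rw [← star_eq_conjTranspose, Unitary.star_mul_self_of_mem (σ g).2, Matrix.mul_one]
    _ = X * (σ g).1 := by rw [← Matrix.mul_assoc, hXg]

lemma exists_matEquiv_of_matIrreducible (hK : IsKazhdanPair Γ F ε) (hε : 0 < ε) {m : ℕ}
    (ρ : ℕ → Γ →* unitaryGroup (Fin m) ℂ) (hρ : ∀ n, MatIrreducible (ρ n)) :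
    ∃ i j, i ≠ j ∧ MatEquiv (ρ i) (ρ j) := by
  rcases Nat.eq_zero_or_pos m with rfl | hm
  · exact ⟨0, 1, zero_ne_one, 0, Subsingleton.elim _ _, Subsingleton.elim _ _,
      fun _ => Subsingleton.elim _ _⟩
  have : NeZero m := ⟨hm.ne'⟩
  set r := ‖toLp 2 (1 : Matrix (Fin m) (Fin m) ℂ).vec‖
  let u : ℕ → F → EuclideanSpace ℂ (Fin m × Fin m) := fun n g => toLp 2 (ρ n g).1.vec
  have hu : ∀ n, u n ∈ Metric.closedBall 0 r := fun n => by
    refine mem_closedBall_zero_iff.2 <| (pi_norm_le_iff_of_nonneg (norm_nonneg _)).2 fun g => ?_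
    simpa using (norm_toLp_vec_mul_unitary (1 : Matrix (Fin m) (Fin m) ℂ) (ρ n g)).le
  have hr : 0 < r := by simp [r, vec_eq_zero_iff]
  obtain ⟨i, j, hij, hdist⟩ :=
    exists_ne_dist_lt_of_isCompact (isCompact_closedBall _ _) hu (mul_pos hε hr)
  obtain ⟨X, hX, hXij⟩ := hK.exists_intertwines (ρ i) (ρ j) fun g hg =>
    calc ‖toLp 2 ((ρ i g).1 - (ρ j g).1).vec‖ = ‖(u i - u j) ⟨g, hg⟩‖ := by simp [u, vec_sub]
      _ ≤ dist (u i) (u j) := (norm_le_pi_norm _ _).trans (dist_eq_norm _ _).ge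
      _ < ε * r := hdist
  exact ⟨j, i, hij.symm, (hρ j).matEquiv_of_intertwines hX hXij⟩

end IsKazhdanPair

section Dimension

variable {Γ : Type*} [Group Γ]

lemma MatIrreducible.cast {a b : ℕ} (h : a = b) {σ : Γ →* unitaryGroup (Fin a) ℂ}
    (hσ : MatIrreducible σ) : MatIrreducible (h ▸ σ : Γ →* unitaryGroup (Fin b) ℂ) := by
  subst h
  exact hσ

lemma MatEquiv.of_cast {a b a' b' : ℕ} (h : a = b) (h' : a' = b')
    {σ : Γ →* unitaryGroup (Fin a) ℂ} {σ' : Γ →* unitaryGroup (Fin a') ℂ}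
    (hE : MatEquiv (h ▸ σ : Γ →* unitaryGroup (Fin b) ℂ)
      (h' ▸ σ' : Γ →* unitaryGroup (Fin b') ℂ)) : MatEquiv σ σ' := by
  subst h h'
  exact hE

lemma IsKazhdanPair.finite_setOf_dim_eq {F : Finset Γ} {ε : ℝ} (hK : IsKazhdanPair Γ F ε)
    (hε : 0 < ε) {d : ℕ → ℕ} (ρ : (n : ℕ) → Γ →* unitaryGroup (Fin (d n)) ℂ)
    (hρ : ∀ n, MatIrreducible (ρ n)) (hinequiv : ∀ i j, i ≠ j → ¬ MatEquiv (ρ i) (ρ j)) (k : ℕ) :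
    {n | d n = k}.Finite := by
  by_contra hinf
  let f := Set.Infinite.natEmbedding _ hinf
  obtain ⟨i, j, hij, hE⟩ := hK.exists_matEquiv_of_matIrreducible hε
    (fun t => ((f t).2 : d (f t) = k) ▸ ρ (f t)) fun t => (hρ (f t)).cast (f t).2
  exact hinequiv _ _ (fun h => hij (f.injective (Subtype.ext h))) (hE.of_cast _ _)

end Dimension

lemma exists_equiv_monotone_comp {d : ℕ → ℕ} (hd : ∀ k, {n | d n = k}.Finite) :
    ∃ e : ℕ ≃ ℕ, Monotone (d ∘ e) := by
  choose B hB using fun k => (hd k).bddAbove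
  -- `κ` places the fibres of `d` one after another, in increasing order of `d`
  let κ : ℕ → ℕ := fun n => ∑ k ∈ Finset.range (d n), (B k + 1) + n
  have hκ : ∀ a b, d a < d b → κ a < κ b := fun a b hab =>
    calc κ a < ∑ k ∈ Finset.range (d a + 1), (B k + 1) := by
          rw [Finset.sum_range_succ, ← add_assoc]
          exact Nat.add_lt_add_left (Nat.lt_succ_of_le (hB (d a) rfl)) _
      _ ≤ κ b := (Finset.sum_le_sum_of_subset (Finset.range_subset_range.2 hab)).trans
          (Nat.le_add_right _ _)
  have hκinj : Function.Injective κ := fun a b h => by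
    rcases lt_trichotomy (d a) (d b) with hab | hab | hab
    · exact absurd h (hκ a b hab).ne
    · simpa [κ, hab] using h
    · exact absurd h (hκ b a hab).ne'
  have : Infinite (Set.range κ) := (Set.infinite_range_of_injective hκinj).to_subtype
  let e : ℕ ≃ ℕ := (Nat.Subtype.orderIsoOfNat _).toEquiv.trans (Equiv.ofInjective κ hκinj).symm
  have hκe : ∀ n, κ (e n) = Nat.Subtype.orderIsoOfNat (Set.range κ) n :=
    fun n => Equiv.apply_ofInjective_symm hκinj _
  refine ⟨e, fun a b hab => not_lt.1 fun hlt => ?_⟩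
  have := hκ _ _ hlt
  rw [hκe, hκe] at this
  exact absurd ((Nat.Subtype.orderIsoOfNat _).monotone hab) (not_le.2 this)

theorem propertyT_finitely_many_irreps_each_dim_general {Γ : Type*} [Group Γ]
    (hT : HasPropertyT Γ) :
    (∀ m : ℕ, ¬ ∃ ρseq : ℕ → (Γ →* Matrix.unitaryGroup (Fin m) ℂ),
        (∀ n, MatIrreducible (ρseq n)) ∧
        ∀ i j, i ≠ j → ¬ MatEquiv (ρseq i) (ρseq j)) ∧
    (∀ (d : ℕ → ℕ) (_ : ∀ n, 0 < d n)
        (ρ : (n : ℕ) → Γ →* Matrix.unitaryGroup (Fin (d n)) ℂ),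
      (∀ n, MatIrreducible (ρ n)) →
      (∀ i j, i ≠ j → ¬ MatEquiv (ρ i) (ρ j)) →
      ∃ e : ℕ ≃ ℕ, Monotone (fun n => d (e n)) ∧
        Tendsto (fun n => d (e n)) atTop atTop) := by
  obtain ⟨F, ε, hε, hK⟩ := hT
  refine ⟨fun m ⟨ρ, hρ, hinequiv⟩ => ?_, fun d _ ρ hρ hinequiv => ?_⟩
  · obtain ⟨i, j, hij, hE⟩ := hK.exists_matEquiv_of_matIrreducible hε ρ hρ
    exact hinequiv i j hij hE
  · have hd := hK.finite_setOf_dim_eq hε ρ hρ hinequiv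
    obtain ⟨e, he⟩ := exists_equiv_monotone_comp hd
    refine ⟨e, he, ?_⟩
    simpa only [Nat.cofinite_eq_atTop] using
      Tendsto.cofinite_of_finite_preimage_singleton fun k =>
        ((hd k).preimage e.injective.injOn : (e ⁻¹' {n | d n = k}).Finite)

/-- A finitely generated property (T) group has only finitely many pairwise inequivalent
irreducible unitary representations in each finite dimension; consequently any infinite
family of pairwise inequivalent finite-dimensional irreducible representations can be
enumerated with nondecreasing dimensions tending to infinity. -/
theorem propertyT_finitely_many_irreps_each_dim {Γ : Type*} [Group Γ]
    (hFG : Group.FG Γ) (hT : HasPropertyT Γ) :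
    (∀ m : ℕ, ¬ ∃ ρseq : ℕ → (Γ →* Matrix.unitaryGroup (Fin m) ℂ),
        (∀ n, MatIrreducible (ρseq n)) ∧
        ∀ i j, i ≠ j → ¬ MatEquiv (ρseq i) (ρseq j)) ∧
    (∀ (d : ℕ → ℕ) (_ : ∀ n, 0 < d n)
        (ρ : (n : ℕ) → Γ →* Matrix.unitaryGroup (Fin (d n)) ℂ),
      (∀ n, MatIrreducible (ρ n)) →
      (∀ i j, i ≠ j → ¬ MatEquiv (ρ i) (ρ j)) →
      ∃ e : ℕ ≃ ℕ, Monotone (fun n => d (e n)) ∧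
        Tendsto (fun n => d (e n)) atTop atTop) :=
  propertyT_finitely_many_irreps_each_dim_general hT
end
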